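/- Let a be a finite-dimensional nilpotent associative algebra over F_q, λ ∈ a*, and p ⊆ a a maximal isotropic subspace for B_λ(x,y) = λ(xy−yx) that is an associative subalgebra with λ(p²) = 0. Then the index of P = 1 + p in G = 1 + a satisfies [G : P] = q^((dim a − dim g^λ)/2), i.e., [G : P]² equals the size of the coadjoint orbit of λ. -/

import Mathlib

/-!
`B_λ(x, y) = λ(xy − yx)` is alternating with radical `g^λ`, so a maximal isotropic subspace `p`
equals its own `B_λ`-orthogonal and contains `g^λ`; the dimension formula for orthogonal
complements then gives `2 dim p = dim a + dim g^λ`, whence `[G : P] = q^(dim a − dim p)` is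
`q^((dim a − dim g^λ)/2)`. Since `a` is nilpotent, `G = 1 + a` is a group of units, and `1 + x`
fixes `λ` exactly when `x ∈ g^λ`; orbit–stabilizer gives an orbit of size `q^(dim a − dim g^λ)`.
-/

open Unitization Module

variable {F : Type*} [Field F] [Fintype F]
  (a : Type*) [NonUnitalRing a] [Module F a] [SMulCommClass F a a] [IsScalarTower F a a]

/-- The coadjoint action `(Ad*(g)λ)(x) = λ(g⁻¹ x g)`. -/
noncomputable def coAd (g : (Unitization F a)ˣ) (l : Module.Dual F a) : Module.Dual F a :=
  l ∘ₗ (sndHom F F a) ∘ₗ (LinearMap.mulRight F ((g : Unitization F a))) ∘ₗ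
    (LinearMap.mulLeft F (((g⁻¹ : (Unitization F a)ˣ) : Unitization F a))) ∘ₗ (inrHom F F a)

namespace LinearMap.BilinForm

variable {K V : Type*} [Field K] [AddCommGroup V] [Module K V] {B : LinearMap.BilinForm K V}
  {W : Submodule K V}

theorem orthogonal_eq_self_of_maximal_isotropic (hB : B.IsAlt)
    (hW : Maximal (fun W' : Submodule K V => W' ≤ B.orthogonal W') W) :
    B.orthogonal W = W := by
  refine le_antisymm (fun x hx => ?_) hW.prop
  have hiso : W ⊔ K ∙ x ≤ B.orthogonal (W ⊔ K ∙ x) := by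
    intro v hv n hn
    obtain ⟨w₁, hw₁, y₁, hy₁, rfl⟩ := Submodule.mem_sup.mp hn
    obtain ⟨w₂, hw₂, y₂, hy₂, rfl⟩ := Submodule.mem_sup.mp hv
    obtain ⟨c, rfl⟩ := Submodule.mem_span_singleton.mp hy₁
    obtain ⟨d, rfl⟩ := Submodule.mem_span_singleton.mp hy₂
    have hxw₂ : B x w₂ = 0 := hB.isRefl _ _ (hx w₂ hw₂)
    simp [hW.prop hw₂ w₁ hw₁, hx w₁ hw₁, hxw₂, hB x]
  exact hW.2 hiso le_sup_left (Submodule.mem_sup_right (Submodule.mem_span_singleton_self x))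

theorem ker_le_of_maximal_isotropic (hB : B.IsAlt)
    (hW : Maximal (fun W' : Submodule K V => W' ≤ B.orthogonal W') W) :
    LinearMap.ker B ≤ W := by
  rw [← orthogonal_eq_self_of_maximal_isotropic hB hW]
  intro x hx n _
  exact hB.isRefl _ _ (by rw [LinearMap.mem_ker.mp hx, LinearMap.zero_apply])

theorem two_mul_finrank_of_maximal_isotropic [FiniteDimensional K V] (hB : B.IsAlt)
    (hW : Maximal (fun W' : Submodule K V => W' ≤ B.orthogonal W') W) :
    2 * finrank K W = finrank K V + finrank K (LinearMap.ker B) := by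
  have h := finrank_add_finrank_orthogonal' (B := B) W
  rwa [orthogonal_eq_self_of_maximal_isotropic hB hW,
    inf_eq_right.mpr (ker_le_of_maximal_isotropic hB hW), ← two_mul] at h

end LinearMap.BilinForm

section Kirillov

variable {R A : Type*} [CommRing R] [NonUnitalRing A] [Module R A] [SMulCommClass R A A]
  [IsScalarTower R A A]

def kirillovForm (l : Module.Dual R A) : LinearMap.BilinForm R A :=
  (LinearMap.mul R A - (LinearMap.mul R A).flip).compr₂ l

@[simp]
theorem kirillovForm_apply (l : Module.Dual R A) (x y : A) :
    kirillovForm l x y = l (x * y - y * x) := rfl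

theorem kirillovForm_isAlt (l : Module.Dual R A) : (kirillovForm l).IsAlt := fun x => by
  simp

end Kirillov

namespace Unitization

variable {R A : Type*} [CommRing R] [NonUnitalRing A]

theorem inr_snd_of_fst_eq_zero {u : Unitization R A} (hu : u.fst = 0) : inr u.snd = u := by
  rw [← inl_fst_add_inr_snd_eq u, hu]; simp

theorem exists_eq_one_add_inr_iff (u : Unitization R A) :
    (∃ x : A, u = 1 + inr x) ↔ u.fst = 1 := by
  refine ⟨fun ⟨x, hx⟩ => by simp [hx], fun hu => ⟨u.snd, ?_⟩⟩
  rw [← inl_fst_add_inr_snd_eq u, hu]; simp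

theorem one_add_inr_injective : Function.Injective fun x : A => (1 + inr x : Unitization R A) :=
  fun _ _ h => inr_injective (add_left_cancel h)

theorem natCard_setOf_eq_one_add_inr_mem {S : Type*} [SetLike S A] (s : S) :
    Nat.card {u : Unitization R A | ∃ x ∈ s, u = 1 + inr x} = Nat.card s := by
  rw [← SetLike.coe_sort_coe,
    ← Nat.card_image_of_injective (one_add_inr_injective (R := R) (A := A))]
  congr! 2; ext u; simp [eq_comm]

theorem natCard_setOf_eq_one_add_inr :
    Nat.card {u : Unitization R A | ∃ x : A, u = 1 + inr x} = Nat.card A := by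
  rw [← Nat.card_range_of_injective (one_add_inr_injective (R := R) (A := A))]
  congr! 2; ext u; simp [eq_comm]

variable [Module R A] [SMulCommClass R A A] [IsScalarTower R A A]

variable (R A) in
def oneAddUnits : Subgroup (Unitization R A)ˣ :=
  (Units.map (fstHom R A : Unitization R A →* R)).ker

theorem mem_oneAddUnits {g : (Unitization R A)ˣ} :
    g ∈ oneAddUnits R A ↔ (g : Unitization R A).fst = 1 := by
  simp [oneAddUnits, Units.ext_iff]

noncomputable def oneAddUnitsEquiv (hnil : ∀ x : A, IsNilpotent (inr x : Unitization R A)) :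
    oneAddUnits R A ≃ A where
  toFun g := ((g : (Unitization R A)ˣ) : Unitization R A).snd
  invFun x := ⟨(hnil x).isUnit_one_add.unit, by simp [mem_oneAddUnits]⟩
  left_inv g := by
    obtain ⟨x, hx⟩ := (exists_eq_one_add_inr_iff _).mpr (mem_oneAddUnits.mp g.2)
    ext1; ext1; simp [hx]
  right_inv x := by simp

@[simp]
theorem oneAddUnitsEquiv_apply (hnil : ∀ x : A, IsNilpotent (inr x : Unitization R A))
    (g : oneAddUnits R A) :
    oneAddUnitsEquiv hnil g = ((g : (Unitization R A)ˣ) : Unitization R A).snd := rfl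

end Unitization

section CoAd

variable {K A : Type*} [Field K] [NonUnitalRing A] [Module K A] [SMulCommClass K A A]
  [IsScalarTower K A A]

theorem coAd_apply (g : (Unitization K A)ˣ) (l : Module.Dual K A) (x : A) :
    coAd A g l x = l ((↑g⁻¹ * (inr x : Unitization K A) * ↑g).snd) := rfl

theorem coAd_one (l : Module.Dual K A) : coAd A 1 l = l := by
  ext x; simp [coAd_apply]

theorem coAd_mul (g h : (Unitization K A)ˣ) (l : Module.Dual K A) :
    coAd A (g * h) l = coAd A g (coAd A h l) := by
  ext x
  rw [coAd_apply, coAd_apply, coAd_apply, inr_snd_of_fst_eq_zero (by simp)]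
  simp only [mul_inv_rev, Units.val_mul, mul_assoc]

variable (A) in
noncomputable abbrev coAdAction : MulAction (Unitization K A)ˣ (Module.Dual K A) where
  smul := coAd A
  one_smul := coAd_one
  mul_smul := coAd_mul

theorem coAd_eq_self_iff (g : (Unitization K A)ˣ) (l : Module.Dual K A) :
    coAd A g l = l ↔
      ∀ y : A, l ((inr y : Unitization K A) * ↑g).snd = l (↑g * (inr y : Unitization K A)).snd := by
  -- substitute `x = g y` in `l (g⁻¹ x g) = l x`; `g y` lies in `A` because `A` is an ideal
  rw [LinearMap.ext_iff]
  constructor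
  · intro h y
    have hgy : (inr (↑g * (inr y : Unitization K A)).snd : Unitization K A) =
        ↑g * (inr y : Unitization K A) :=
      inr_snd_of_fst_eq_zero (by simp)
    have := h (↑g * (inr y : Unitization K A)).snd
    rwa [coAd_apply, hgy, Units.inv_mul_cancel_left] at this
  · intro h u
    have hgu : (inr (↑g⁻¹ * (inr u : Unitization K A)).snd : Unitization K A) =
        ↑g⁻¹ * (inr u : Unitization K A) :=
      inr_snd_of_fst_eq_zero (by simp)
    have := h (↑g⁻¹ * (inr u : Unitization K A)).snd
    rw [coAd_apply]
    rwa [hgu, Units.mul_inv_cancel_left, snd_inr] at this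

theorem coAd_eq_self_iff_of_fst_eq_one {g : (Unitization K A)ˣ}
    (hg : (g : Unitization K A).fst = 1) (l : Module.Dual K A) :
    coAd A g l = l ↔
      ∀ y : A, l ((g : Unitization K A).snd * y - y * (g : Unitization K A).snd) = 0 := by
  refine (coAd_eq_self_iff g l).trans (forall_congr' fun y => ?_)
  simp only [snd_mul, fst_inr, snd_inr, hg, zero_smul, one_smul, zero_add, add_zero,
    map_add, map_sub]
  constructor <;> intro h <;> linear_combination -h

theorem natCard_coAd_orbit_mul_natCard_ker
    (hnil : ∀ x : A, IsNilpotent (inr x : Unitization K A)) (l : Module.Dual K A) :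
    Nat.card {mu : Module.Dual K A | ∃ g : (Unitization K A)ˣ,
        (∃ x : A, (g : Unitization K A) = 1 + inr x) ∧ coAd A g l = mu} *
      Nat.card (LinearMap.ker (kirillovForm l)) = Nat.card A := by
  let := coAdAction (K := K) A
  have horbit : {mu : Module.Dual K A | ∃ g : (Unitization K A)ˣ,
      (∃ x : A, (g : Unitization K A) = 1 + inr x) ∧ coAd A g l = mu} =
      MulAction.orbit (oneAddUnits K A) l := by
    ext mu
    constructor
    · rintro ⟨g, hg, rfl⟩
      exact ⟨⟨g, mem_oneAddUnits.mpr ((exists_eq_one_add_inr_iff _).mp hg)⟩, rfl⟩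
    · rintro ⟨g, rfl⟩
      exact ⟨g, (exists_eq_one_add_inr_iff _).mpr (mem_oneAddUnits.mp g.2), rfl⟩
  have hstab : Nat.card (MulAction.stabilizer (oneAddUnits K A) l) =
      Nat.card (LinearMap.ker (kirillovForm l)) :=
    Nat.card_congr <| (oneAddUnitsEquiv hnil).subtypeEquiv fun g => by
      rw [MulAction.mem_stabilizer_iff, LinearMap.mem_ker]
      exact (coAd_eq_self_iff_of_fst_eq_one (mem_oneAddUnits.mp g.2) l).trans
        (by simp [LinearMap.ext_iff])
  rw [horbit, Nat.card_coe_set_eq, ← MulAction.index_stabilizer, ← hstab, mul_comm,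
    Subgroup.card_mul_index, Nat.card_congr (oneAddUnitsEquiv hnil)]

end CoAd

theorem stmt17 [FiniteDimensional F a]
    (hnil : ∃ n : ℕ, 0 < n ∧ ∀ f : Fin n → a,
      (List.ofFn (fun i => (inr (f i) : Unitization F a))).prod = 0)
    (lam : Module.Dual F a)
    (glam : Submodule F a)
    (hglam : ∀ x : a, x ∈ glam ↔ ∀ y : a, lam (x * y - y * x) = 0)
    (p : Submodule F a)
    (hiso : ∀ x ∈ p, ∀ y ∈ p, lam (x * y - y * x) = 0)
    (hmax : ∀ p' : Submodule F a,
      (∀ x ∈ p', ∀ y ∈ p', lam (x * y - y * x) = 0) → p ≤ p' → p' = p) :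
    Nat.card {u : Unitization F a | ∃ x : a, u = 1 + inr x}
        / Nat.card {u : Unitization F a | ∃ x ∈ p, u = 1 + inr x}
      = Fintype.card F ^ ((finrank F a - finrank F glam) / 2) ∧
    (Nat.card {u : Unitization F a | ∃ x : a, u = 1 + inr x}
        / Nat.card {u : Unitization F a | ∃ x ∈ p, u = 1 + inr x}) ^ 2
      = Nat.card {mu : Module.Dual F a |
          ∃ g : (Unitization F a)ˣ, (∃ x : a, (g : Unitization F a) = 1 + inr x) ∧
            coAd a g lam = mu} := by
  have hnil' : ∀ x : a, IsNilpotent (inr x : Unitization F a) := by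
    obtain ⟨n, -, hn⟩ := hnil
    exact fun x => ⟨n, by simpa [List.ofFn_const, List.prod_replicate] using hn fun _ => x⟩
  have hker : LinearMap.ker (kirillovForm lam) = glam := by
    ext x; simp [hglam, LinearMap.ext_iff]
  have hp : Maximal (fun W : Submodule F a => W ≤ (kirillovForm lam).orthogonal W) p :=
    ⟨fun y hy x hx => hiso x hx y hy,
      fun p' hp' hle => (hmax p' (fun x hx y hy => hp' hy x hx) hle).le⟩
  have hdim :=
    LinearMap.BilinForm.two_mul_finrank_of_maximal_isotropic (kirillovForm_isAlt lam) hp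
  have horbit := natCard_coAd_orbit_mul_natCard_ker hnil' lam
  rw [hker] at hdim horbit
  have hq : 0 < Fintype.card F := Fintype.card_pos
  have hpa : finrank F p ≤ finrank F a := Submodule.finrank_le p
  have hga : finrank F glam ≤ finrank F a := Submodule.finrank_le glam
  rw [natCard_setOf_eq_one_add_inr, natCard_setOf_eq_one_add_inr_mem]
  have hcard : ∀ (V : Type _) [AddCommGroup V] [Module F V] [Module.Finite F V],
      Nat.card V = Fintype.card F ^ finrank F V := fun V _ _ _ => by
    rw [Module.natCard_eq_pow_finrank (K := F), Nat.card_eq_fintype_card]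
  rw [hcard a, hcard glam, ← Nat.sub_add_cancel hga, pow_add] at horbit
  rw [hcard a, hcard p, Nat.pow_div hpa hq, Nat.eq_of_mul_eq_mul_right (pow_pos hq _) horbit,
    ← pow_mul]
  constructor <;> congr 1 <;> omega
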